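/- arXiv:2109.09079 — 3 statements merged into one kernel-verified Lean document; each statement's English description precedes it below -/
import Mathlib

section
/- The state error covariance update map is bounded above by its first-order Taylor approximation: for all positive semidefinite matrices Σ and X and all ε ≥ 0, ρ(Σ + εX) ⪯ ρ(Σ) + ε Ã(Σ) X Ã(Σ)ᵀ. -/
open Matrix BigOperators

noncomputable section

/-- `R̃(Σ) = C (A Σ Aᵀ + Q) Cᵀ + R`. -/
def Rt {ny nz : ℕ} (A Q : Matrix (Fin ny) (Fin ny) ℝ)
    (C : Matrix (Fin nz) (Fin ny) ℝ) (R : Matrix (Fin nz) (Fin nz) ℝ)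
    (S : Matrix (Fin ny) (Fin ny) ℝ) : Matrix (Fin nz) (Fin nz) ℝ :=
  C * (A * S * Aᵀ + Q) * Cᵀ + R

/-- Optimal unknown-input filter gain `M(Σ)`. -/
def Mg {ny nz nd : ℕ} (A Q : Matrix (Fin ny) (Fin ny) ℝ) (G : Matrix (Fin ny) (Fin nd) ℝ)
    (C : Matrix (Fin nz) (Fin ny) ℝ) (R : Matrix (Fin nz) (Fin nz) ℝ)
    (S : Matrix (Fin ny) (Fin ny) ℝ) : Matrix (Fin nd) (Fin nz) ℝ :=
  ((C * G)ᵀ * (Rt A Q C R S)⁻¹ * (C * G))⁻¹ * (C * G)ᵀ * (Rt A Q C R S)⁻¹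

/-- Optimal state filter gain `K(Σ)`. -/
def Kg {ny nz : ℕ} (A Q : Matrix (Fin ny) (Fin ny) ℝ)
    (C : Matrix (Fin nz) (Fin ny) ℝ) (R : Matrix (Fin nz) (Fin nz) ℝ)
    (S : Matrix (Fin ny) (Fin ny) ℝ) : Matrix (Fin ny) (Fin nz) ℝ :=
  (A * S * Aᵀ + Q) * Cᵀ * (Rt A Q C R S)⁻¹

/-- Closed loop matrix `Ã(Σ)`. -/
def Atil {ny nz nd : ℕ} (A Q : Matrix (Fin ny) (Fin ny) ℝ) (G : Matrix (Fin ny) (Fin nd) ℝ)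
    (C : Matrix (Fin nz) (Fin ny) ℝ) (R : Matrix (Fin nz) (Fin nz) ℝ)
    (S : Matrix (Fin ny) (Fin ny) ℝ) : Matrix (Fin ny) (Fin ny) ℝ :=
  (1 - Kg A Q C R S * C) * (1 - G * Mg A Q G C R S * C) * A

/-- `F̃(Σ)`. -/
def Ftil {ny nz nd : ℕ} (A Q : Matrix (Fin ny) (Fin ny) ℝ) (G : Matrix (Fin ny) (Fin nd) ℝ)
    (C : Matrix (Fin nz) (Fin ny) ℝ) (R : Matrix (Fin nz) (Fin nz) ℝ)
    (S : Matrix (Fin ny) (Fin ny) ℝ) : Matrix (Fin ny) (Fin ny) ℝ :=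
  -((1 - Kg A Q C R S * C) * (1 - G * Mg A Q G C R S * C))

/-- `W̃(Σ)`. -/
def Wtil {ny nz nd : ℕ} (A Q : Matrix (Fin ny) (Fin ny) ℝ) (G : Matrix (Fin ny) (Fin nd) ℝ)
    (C : Matrix (Fin nz) (Fin ny) ℝ) (R : Matrix (Fin nz) (Fin nz) ℝ)
    (S : Matrix (Fin ny) (Fin ny) ℝ) : Matrix (Fin ny) (Fin nz) ℝ :=
  G * Mg A Q G C R S - Kg A Q C R S * C * G * Mg A Q G C R S + Kg A Q C R S

/-- The state error covariance update map `ρ(Σ)`. -/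
def rho {ny nz nd : ℕ} (A Q : Matrix (Fin ny) (Fin ny) ℝ) (G : Matrix (Fin ny) (Fin nd) ℝ)
    (C : Matrix (Fin nz) (Fin ny) ℝ) (R : Matrix (Fin nz) (Fin nz) ℝ)
    (S : Matrix (Fin ny) (Fin ny) ℝ) : Matrix (Fin ny) (Fin ny) ℝ :=
  Atil A Q G C R S * S * (Atil A Q G C R S)ᵀ
    + Ftil A Q G C R S * Q * (Ftil A Q G C R S)ᵀ
    + Wtil A Q G C R S * R * (Wtil A Q G C R S)ᵀ

/-- The unknown-input error covariance update map `ρᵈ(Σ)`. -/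
def rhod {ny nz nd : ℕ} (A Q : Matrix (Fin ny) (Fin ny) ℝ) (G : Matrix (Fin ny) (Fin nd) ℝ)
    (C : Matrix (Fin nz) (Fin ny) ℝ) (R : Matrix (Fin nz) (Fin nz) ℝ)
    (S : Matrix (Fin ny) (Fin ny) ℝ) : Matrix (Fin nd) (Fin nd) ℝ :=
  ((C * G)ᵀ * (Rt A Q C R S)⁻¹ * (C * G))⁻¹

/-!
Write `P(Σ) = AΣAᵀ + Q` and, for a gain `W`, let `Γ(W, P) = (I - WC) P (I - WC)ᵀ + W R Wᵀ`
be the Joseph form of the measurement update. Then `ρ(Σ) = Γ(W̃(Σ), P(Σ))` and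
`Ã(Σ) = (I - W̃(Σ)C)A`, and `Γ(W, ·)` is affine, so
`ρ(Σ) + εÃ(Σ)XÃ(Σ)ᵀ = Γ(W̃(Σ), P(Σ + εX))`. Every gain `W̃(Σ)` satisfies the unbiasedness
constraint `W̃(Σ)CG = G`, and `W̃(Σ')` minimises the convex quadratic `Γ(·, P(Σ'))` on this
affine set of gains: its stationarity condition `R̃(Σ')W̃(Σ')ᵀ - CP(Σ') ∈ range (CG)` holds.
Hence `ρ(Σ + εX) = Γ(W̃(Σ + εX), P(Σ + εX)) ⪯ Γ(W̃(Σ), P(Σ + εX))`.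
-/

section JosephForm

variable {n m : Type*} [Fintype n] [Fintype m] [DecidableEq n]

def josephCov (C : Matrix m n ℝ) (R : Matrix m m ℝ) (W : Matrix n m ℝ) (P : Matrix n n ℝ) :
    Matrix n n ℝ :=
  (1 - W * C) * P * (1 - W * C)ᵀ + W * R * Wᵀ

lemma josephCov_add_right (C : Matrix m n ℝ) (R : Matrix m m ℝ) (W : Matrix n m ℝ)
    (P Y : Matrix n n ℝ) :
    josephCov C R W (P + Y) = josephCov C R W P + (1 - W * C) * Y * (1 - W * C)ᵀ := by
  simp only [josephCov, Matrix.mul_add, Matrix.add_mul]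
  abel

lemma josephCov_sub_josephCov {C : Matrix m n ℝ} {R : Matrix m m ℝ} {P : Matrix n n ℝ}
    (hP : P.IsSymm) (hR : R.IsSymm) (W₀ W : Matrix n m ℝ) :
    josephCov C R W₀ P - josephCov C R W P
      = (W₀ - W) * (C * P * Cᵀ + R) * (W₀ - W)ᵀ
        + ((W₀ - W) * ((C * P * Cᵀ + R) * Wᵀ - C * P)
          + ((C * P * Cᵀ + R) * Wᵀ - C * P)ᵀ * (W₀ - W)ᵀ) := by
  simp only [josephCov, transpose_mul, transpose_add, transpose_sub, transpose_one,
    transpose_transpose, hP.eq, hR.eq]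
  simp only [Matrix.mul_add, Matrix.add_mul, Matrix.sub_mul, Matrix.mul_sub,
    Matrix.mul_one, Matrix.one_mul, Matrix.mul_assoc]
  abel

/-- `hZ` is the first-order condition for `W` to minimise `josephCov C R · P` among the gains
`W₀` with `W₀ * F = W * F`; the cross terms of the expansion around `W` then vanish. -/
lemma posSemidef_josephCov_sub_of_stationary {k : Type*} [Fintype k] {C : Matrix m n ℝ}
    {R : Matrix m m ℝ} {P : Matrix n n ℝ} (hP : P.PosSemidef) (hR : R.PosSemidef)
    {W₀ W : Matrix n m ℝ} {F : Matrix m k ℝ} (hWF : W₀ * F = W * F) (Z : Matrix k n ℝ)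
    (hZ : (C * P * Cᵀ + R) * Wᵀ - C * P = F * Z) :
    (josephCov C R W₀ P - josephCov C R W P).PosSemidef := by
  have hcross : (W₀ - W) * ((C * P * Cᵀ + R) * Wᵀ - C * P) = 0 := by
    rw [hZ, ← Matrix.mul_assoc, Matrix.sub_mul, hWF, sub_self, Matrix.zero_mul]
  rw [josephCov_sub_josephCov (isHermitian_iff_isSymm.mp hP.1) (isHermitian_iff_isSymm.mp hR.1),
    hcross, ← transpose_mul, hcross, transpose_zero, add_zero, add_zero]
  simpa using ((hP.mul_mul_conjTranspose_same C).add hR).mul_mul_conjTranspose_same (W₀ - W)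

end JosephForm

lemma Matrix.mulVec_injective_of_rank_eq_card {m k : Type*} [Fintype k] {F : Matrix m k ℝ}
    (hF : F.rank = Fintype.card k) : Function.Injective F.mulVec := by
  rw [mulVec_injective_iff, linearIndependent_iff_card_eq_finrank_span, ← hF,
    rank_eq_finrank_span_cols]
  rfl

section Identities

variable {ny nz nd : ℕ} (A Q : Matrix (Fin ny) (Fin ny) ℝ) (G : Matrix (Fin ny) (Fin nd) ℝ)
  (C : Matrix (Fin nz) (Fin ny) ℝ) (R : Matrix (Fin nz) (Fin nz) ℝ)
  (S : Matrix (Fin ny) (Fin ny) ℝ)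

lemma Atil_eq : Atil A Q G C R S = (1 - Wtil A Q G C R S * C) * A := by
  simp only [Atil, Wtil, Matrix.add_mul, Matrix.sub_mul, Matrix.mul_sub,
    Matrix.mul_one, Matrix.one_mul, Matrix.mul_assoc]
  abel

lemma rho_eq_josephCov :
    rho A Q G C R S = josephCov C R (Wtil A Q G C R S) (A * S * Aᵀ + Q) := by
  have hF : Ftil A Q G C R S = -(1 - Wtil A Q G C R S * C) := by
    simp only [Ftil, Wtil, Matrix.add_mul, Matrix.sub_mul, Matrix.mul_sub,
      Matrix.mul_one, Matrix.one_mul, Matrix.mul_assoc]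
    congr 1
    abel
  simp only [rho, josephCov, hF, Atil_eq, transpose_mul, transpose_neg, Matrix.mul_add,
    Matrix.add_mul, Matrix.neg_mul, Matrix.mul_neg, neg_neg, Matrix.mul_assoc]

lemma rho_add_Atil_conj (Y : Matrix (Fin ny) (Fin ny) ℝ) :
    rho A Q G C R S + Atil A Q G C R S * Y * (Atil A Q G C R S)ᵀ
      = josephCov C R (Wtil A Q G C R S) (A * (S + Y) * Aᵀ + Q) := by
  have hsplit : A * (S + Y) * Aᵀ + Q = (A * S * Aᵀ + Q) + A * Y * Aᵀ := by
    rw [Matrix.mul_add, Matrix.add_mul]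
    abel
  rw [hsplit, josephCov_add_right, rho_eq_josephCov, Atil_eq]
  simp only [transpose_mul, Matrix.mul_assoc]

end Identities

section Gains

variable {ny nz nd : ℕ} (A : Matrix (Fin ny) (Fin ny) ℝ) {Q : Matrix (Fin ny) (Fin ny) ℝ}
  {G : Matrix (Fin ny) (Fin nd) ℝ} {C : Matrix (Fin nz) (Fin ny) ℝ}
  {R : Matrix (Fin nz) (Fin nz) ℝ} {S : Matrix (Fin ny) (Fin ny) ℝ}

variable (C) in
lemma Rt_posDef (hQ : Q.PosSemidef) (hR : R.PosDef) (hS : S.PosSemidef) :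
    (Rt A Q C R S).PosDef := by
  refine PosDef.posSemidef_add ?_ hR
  simpa using ((hS.mul_mul_conjTranspose_same A).add hQ).mul_mul_conjTranspose_same C

lemma rhod_inv_posDef (hQ : Q.PosSemidef) (hR : R.PosDef) (hF : (C * G).rank = nd)
    (hS : S.PosSemidef) : ((C * G)ᵀ * (Rt A Q C R S)⁻¹ * (C * G)).PosDef := by
  have hinj := (C * G).mulVec_injective_of_rank_eq_card (by rw [hF, Fintype.card_fin])
  simpa using (Rt_posDef A C hQ hR hS).inv.conjTranspose_mul_mul_same hinj

lemma Mg_mul_eq_one (hQ : Q.PosSemidef) (hR : R.PosDef) (hF : (C * G).rank = nd)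
    (hS : S.PosSemidef) : Mg A Q G C R S * (C * G) = 1 := by
  rw [Mg, Matrix.mul_assoc, Matrix.mul_assoc, ← Matrix.mul_assoc (C * G)ᵀ]
  exact nonsing_inv_mul _ (rhod_inv_posDef A hQ hR hF hS).det_pos.ne'.isUnit

lemma Wtil_mul_eq (hQ : Q.PosSemidef) (hR : R.PosDef) (hF : (C * G).rank = nd)
    (hS : S.PosSemidef) : Wtil A Q G C R S * (C * G) = G := by
  simp only [Wtil, Matrix.sub_mul, Matrix.add_mul, Matrix.mul_assoc,
    Mg_mul_eq_one A hQ hR hF hS, Matrix.mul_one]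
  abel

variable (C) in
lemma Rt_mul_Kg_transpose (hQ : Q.PosSemidef) (hR : R.PosDef) (hS : S.PosSemidef) :
    Rt A Q C R S * (Kg A Q C R S)ᵀ = C * (A * S * Aᵀ + Q) := by
  have hRt := Rt_posDef A C hQ hR hS
  have hP : (A * S * Aᵀ + Q).IsSymm := by
    simpa using ((hS.mul_mul_conjTranspose_same A).add hQ).1
  rw [Kg, transpose_mul, transpose_mul, transpose_transpose, hP.eq,
    (isHermitian_iff_isSymm.mp hRt.inv.1).eq, ← Matrix.mul_assoc,
    mul_nonsing_inv _ hRt.det_pos.ne'.isUnit, Matrix.one_mul]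

lemma Rt_mul_Mg_transpose (hQ : Q.PosSemidef) (hR : R.PosDef) (hF : (C * G).rank = nd)
    (hS : S.PosSemidef) :
    Rt A Q C R S * (Mg A Q G C R S)ᵀ = C * G * rhod A Q G C R S := by
  have hRt := Rt_posDef A C hQ hR hS
  rw [Mg, transpose_mul, transpose_mul, transpose_transpose,
    (isHermitian_iff_isSymm.mp hRt.inv.1).eq,
    (isHermitian_iff_isSymm.mp (rhod_inv_posDef A hQ hR hF hS).inv.1).eq, ← Matrix.mul_assoc,
    mul_nonsing_inv _ hRt.det_pos.ne'.isUnit, Matrix.one_mul]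
  rfl

lemma Rt_mul_Wtil_transpose_sub (hQ : Q.PosSemidef) (hR : R.PosDef) (hF : (C * G).rank = nd)
    (hS : S.PosSemidef) :
    Rt A Q C R S * (Wtil A Q G C R S)ᵀ - C * (A * S * Aᵀ + Q)
      = C * G * (rhod A Q G C R S * Gᵀ * (1 - Kg A Q C R S * C)ᵀ) := by
  have hK := Rt_mul_Kg_transpose A C hQ hR hS
  have hM := Rt_mul_Mg_transpose A hQ hR hF hS
  simp only [Wtil, transpose_add, transpose_sub, transpose_mul, transpose_one, Matrix.mul_add,
    Matrix.mul_sub, Matrix.mul_one, ← Matrix.mul_assoc, hK, hM]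
  exact add_sub_cancel_right _ _

end Gains

/-- the state error covariance update map is bounded above by its
first-order Taylor approximation: for PSD `Σ, X` and `ε ≥ 0`,
`ρ(Σ + εX) ⪯ ρ(Σ) + ε Ã(Σ) X Ã(Σ)ᵀ`. -/
theorem state_update_taylor_bound {ny nz nd : ℕ}
    (A Q : Matrix (Fin ny) (Fin ny) ℝ) (G : Matrix (Fin ny) (Fin nd) ℝ)
    (C : Matrix (Fin nz) (Fin ny) ℝ) (R : Matrix (Fin nz) (Fin nz) ℝ)
    (hQ : Q.PosDef) (hR : R.PosDef) (hF : (C * G).rank = nd)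
    (S X : Matrix (Fin ny) (Fin ny) ℝ) (hS : S.PosSemidef) (hX : X.PosSemidef)
    (ε : ℝ) (hε : 0 ≤ ε) :
    (rho A Q G C R S + ε • (Atil A Q G C R S * X * (Atil A Q G C R S)ᵀ)
      - rho A Q G C R (S + ε • X)).PosSemidef := by
  have hS' : (S + ε • X).PosSemidef := hS.add (hX.smul hε)
  have hP' : (A * (S + ε • X) * Aᵀ + Q).PosSemidef := by
    simpa using (hS'.mul_mul_conjTranspose_same A).add hQ.posSemidef
  rw [← Matrix.smul_mul, ← Matrix.mul_smul, rho_add_Atil_conj, rho_eq_josephCov]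
  exact posSemidef_josephCov_sub_of_stationary hP' hR.posSemidef
    (by rw [Wtil_mul_eq A hQ.posSemidef hR hF hS, Wtil_mul_eq A hQ.posSemidef hR hF hS'])
    _ (Rt_mul_Wtil_transpose_sub A hQ.posSemidef hR hF hS')
end
end

section
/- For every horizon k ∈ [1,N] and all positive semidefinite matrices Σ₀ and X, the matrix-valued function ε ↦ φ_k(Σ₀ + εX) is differentiable at ε = 0 and its derivative there equals Ψ_k X Ψ_kᵀ, where Ψ_k = Ã_k Ã_{k−1} ⋯ Ã_1 is the product of the closed-loop matrices evaluated along the trajectory Σ_t = φ_t(Σ₀); moreover the 0-horizon directional derivative is X itself. -/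
/-
Write `ρ` in Joseph form `ρ(Σ) = (I - W̃C) P (I - W̃C)ᵀ + W̃ R W̃ᵀ` with `P = AΣAᵀ + Q`, so that
`Ã = (I - W̃C) A`. Along a curve `Σ(ε)` the derivative of `ρ` is `(I - W̃C) P' (I - W̃C)ᵀ` plus the
terms coming from the variation `W'` of the gain, namely `W' (R̃ W̃ᵀ - C P)` and its transpose.
Optimality of the gains gives `R̃ W̃ᵀ - C P = F (…)`, while the unbiasedness constraint `W̃ F = G`
holds identically in `Σ`, so `W' F = 0` and the gain terms cancel (an envelope argument). Hence
`Dρ(Σ)[H] = Ã H Ãᵀ`, and the chain rule along `Σ_t = φ_t(Σ₀)` gives `Ψ_k X Ψ_kᵀ`.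
-/

open Matrix BigOperators

noncomputable section

/-- The k-horizon map `φ_k = ρ_k ∘ ⋯ ∘ ρ_1`, where step `t` (here `t = k+1`) uses
the data `(A_{t-1}, Q_{t-1}, G_{t-1}, C_t, R_t)`. -/
def phiMap {ny nz nd : ℕ} (A Q : ℕ → Matrix (Fin ny) (Fin ny) ℝ)
    (G : ℕ → Matrix (Fin ny) (Fin nd) ℝ) (C : ℕ → Matrix (Fin nz) (Fin ny) ℝ)
    (R : ℕ → Matrix (Fin nz) (Fin nz) ℝ) :
    ℕ → Matrix (Fin ny) (Fin ny) ℝ → Matrix (Fin ny) (Fin ny) ℝ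
  | 0, S => S
  | k + 1, S => rho (A k) (Q k) (G k) (C (k + 1)) (R (k + 1)) (phiMap A Q G C R k S)

/-- `Ψ_k := Ã_k Ã_{k-1} ⋯ Ã_1` where `Ã_t` is evaluated at `Σ_{t-1} = φ_{t-1}(Σ₀)`
with step-`t` data (and `Ψ_0 = I`). -/
def PsiProd {ny nz nd : ℕ} (A Q : ℕ → Matrix (Fin ny) (Fin ny) ℝ)
    (G : ℕ → Matrix (Fin ny) (Fin nd) ℝ) (C : ℕ → Matrix (Fin nz) (Fin ny) ℝ)
    (R : ℕ → Matrix (Fin nz) (Fin nz) ℝ) (S0 : Matrix (Fin ny) (Fin ny) ℝ) :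
    ℕ → Matrix (Fin ny) (Fin ny) ℝ
  | 0 => 1
  | k + 1 =>
      Atil (A k) (Q k) (G k) (C (k + 1)) (R (k + 1)) (phiMap A Q G C R k S0) *
        PsiProd A Q G C R S0 k

attribute [local instance] Matrix.normedAddCommGroup Matrix.normedSpace

section MatrixCalculus

variable {l m n : Type*} {x : ℝ}

theorem hasDerivAt_matrix_iff [Fintype m] [Fintype n] {f : ℝ → Matrix m n ℝ}
    {f' : Matrix m n ℝ} : HasDerivAt f f' x ↔ ∀ i j, HasDerivAt (fun t => f t i j) (f' i j) x :=
  ⟨fun h i j => hasDerivAt_pi.1 (hasDerivAt_pi.1 h i) j,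
    fun h => hasDerivAt_pi.2 fun i => hasDerivAt_pi.2 fun j => h i j⟩

theorem HasDerivAt.matrix_mul [Fintype l] [Fintype m] [Fintype n] {f : ℝ → Matrix l m ℝ}
    {g : ℝ → Matrix m n ℝ} {f' : Matrix l m ℝ} {g' : Matrix m n ℝ}
    (hf : HasDerivAt f f' x) (hg : HasDerivAt g g' x) :
    HasDerivAt (fun t => f t * g t) (f' * g x + f x * g') x := by
  rw [hasDerivAt_matrix_iff] at *
  intro i j
  simp only [mul_apply, Matrix.add_apply, ← Finset.sum_add_distrib]
  exact HasDerivAt.fun_sum fun k _ => (hf i k).mul (hg k j)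

theorem HasDerivAt.const_matrix_mul [Fintype l] [Fintype m] [Fintype n] {g : ℝ → Matrix m n ℝ}
    {g' : Matrix m n ℝ} (B : Matrix l m ℝ) (hg : HasDerivAt g g' x) :
    HasDerivAt (fun t => B * g t) (B * g') x := by
  simpa using (hasDerivAt_const x B).matrix_mul hg

theorem HasDerivAt.matrix_mul_const [Fintype l] [Fintype m] [Fintype n] {f : ℝ → Matrix l m ℝ}
    {f' : Matrix l m ℝ} (hf : HasDerivAt f f' x) (B : Matrix m n ℝ) :
    HasDerivAt (fun t => f t * B) (f' * B) x := by
  simpa using hf.matrix_mul (hasDerivAt_const x B)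

theorem HasDerivAt.matrix_transpose [Fintype m] [Fintype n] {f : ℝ → Matrix m n ℝ}
    {f' : Matrix m n ℝ} (hf : HasDerivAt f f' x) : HasDerivAt (fun t => (f t)ᵀ) f'ᵀ x := by
  rw [hasDerivAt_matrix_iff] at *
  exact fun i j => hf j i

theorem ContinuousAt.eventually_isUnit_det {X : Type*} [TopologicalSpace X] [Fintype n]
    [DecidableEq n] {f : X → Matrix n n ℝ} {a : X} (hf : ContinuousAt f a)
    (ha : IsUnit (f a).det) : ∀ᶠ t in nhds a, IsUnit (f t).det :=
  ((continuous_id.matrix_det.continuousAt.comp hf).eventually_ne ha.ne_zero).mono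
    fun _ ht => ht.isUnit

theorem HasDerivAt.matrix_inv [Fintype n] [DecidableEq n] {f : ℝ → Matrix n n ℝ}
    {f' : Matrix n n ℝ} (hf : HasDerivAt f f' x) (hx : IsUnit (f x).det) :
    HasDerivAt (fun t => (f t)⁻¹) (-((f x)⁻¹ * f' * (f x)⁻¹)) x := by
  have hinv : Filter.Tendsto (fun t => (f t)⁻¹) (nhds x) (nhds (f x)⁻¹) :=
    (continuousAt_matrix_inv _ (by simpa using hx.ne_zero)).tendsto.comp hf.continuousAt
  refine hasDerivAt_iff_tendsto_slope.2 ?_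
  refine (((hinv.mono_left nhdsWithin_le_nhds).mul (hasDerivAt_iff_tendsto_slope.1 hf)).mul_const
    (f x)⁻¹).neg.congr' ?_
  -- `(f t)⁻¹ - (f x)⁻¹ = -(f t)⁻¹ * (f t - f x) * (f x)⁻¹` wherever `f t` is invertible
  filter_upwards [nhdsWithin_le_nhds (hf.continuousAt.eventually_isUnit_det hx)] with t ht
  simp only [slope_def_module, Matrix.mul_smul, Matrix.smul_mul, Matrix.mul_sub, Matrix.sub_mul,
    nonsing_inv_mul _ ht, Matrix.one_mul, ← smul_neg, neg_sub]
  rw [Matrix.mul_assoc, mul_nonsing_inv _ hx, Matrix.mul_one]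

end MatrixCalculus

theorem Matrix.mulVec_injective_of_rank_eq {m n K : Type*} [Fintype n] [Field K]
    {F : Matrix m n K} (h : F.rank = Fintype.card n) : Function.Injective F.mulVec := by
  rw [← coe_mulVecLin, ← LinearMap.ker_eq_bot, ← Submodule.finrank_eq_zero]
  have := LinearMap.finrank_range_add_finrank_ker F.mulVecLin
  rw [show Module.finrank K (LinearMap.range F.mulVecLin) = Fintype.card n from h,
    Module.finrank_fintype_fun_eq_card] at this
  omega

section JosephForm

variable {m n : Type*} [Fintype m] [Fintype n] [DecidableEq n]

def josephForm (C : Matrix m n ℝ) (R : Matrix m m ℝ) (W : Matrix n m ℝ) (P : Matrix n n ℝ) :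
    Matrix n n ℝ :=
  (1 - W * C) * P * (1 - W * C)ᵀ + W * R * Wᵀ

theorem posSemidef_josephForm (C : Matrix m n ℝ) {R : Matrix m m ℝ} (W : Matrix n m ℝ)
    {P : Matrix n n ℝ} (hR : R.PosSemidef) (hP : P.PosSemidef) :
    (josephForm C R W P).PosSemidef := by
  have h := (hP.mul_mul_conjTranspose_same (1 - W * C)).add (hR.mul_mul_conjTranspose_same W)
  rwa [conjTranspose_eq_transpose_of_trivial, conjTranspose_eq_transpose_of_trivial] at h

theorem HasDerivAt.josephForm {C : Matrix m n ℝ} {R : Matrix m m ℝ} {W : ℝ → Matrix n m ℝ}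
    {P : ℝ → Matrix n n ℝ} {W' : Matrix n m ℝ} {P' : Matrix n n ℝ} {x : ℝ}
    (hW : HasDerivAt W W' x) (hP : HasDerivAt P P' x) (hPx : (P x).IsSymm) (hR : R.IsSymm)
    (hstat : W' * ((C * P x * Cᵀ + R) * (W x)ᵀ - C * P x) = 0) :
    HasDerivAt (fun t => josephForm C R (W t) (P t))
      ((1 - W x * C) * P' * (1 - W x * C)ᵀ) x := by
  have hL : HasDerivAt (fun t => 1 - W t * C) (-(W' * C)) x :=
    (hW.matrix_mul_const C).const_sub 1
  refine (((hL.matrix_mul hP).matrix_mul hL.matrix_transpose).add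
    ((hW.matrix_mul_const R).matrix_mul hW.matrix_transpose)).congr_deriv ?_
  set E := W' * ((C * P x * Cᵀ + R) * (W x)ᵀ - C * P x)
  calc _ = (1 - W x * C) * P' * (1 - W x * C)ᵀ + (E + Eᵀ) := by
        simp only [E, transpose_mul, transpose_sub, transpose_add, transpose_neg, transpose_one,
          transpose_transpose, hPx.eq, hR.eq, Matrix.mul_sub, Matrix.sub_mul, Matrix.mul_add,
          Matrix.add_mul, Matrix.neg_mul, Matrix.mul_neg, Matrix.one_mul, Matrix.mul_one,
          Matrix.mul_assoc]
        abel
    _ = _ := by rw [hstat, transpose_zero, add_zero, add_zero]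

end JosephForm

section UnknownInputFilter

variable {ny nz nd : ℕ} {A Q : Matrix (Fin ny) (Fin ny) ℝ} {G : Matrix (Fin ny) (Fin nd) ℝ}
  {C : Matrix (Fin nz) (Fin ny) ℝ} {R : Matrix (Fin nz) (Fin nz) ℝ}

theorem one_sub_Kg_mul_mul_one_sub_mul_Mg_mul (S : Matrix (Fin ny) (Fin ny) ℝ) :
    (1 - Kg A Q C R S * C) * (1 - G * Mg A Q G C R S * C) = 1 - Wtil A Q G C R S * C := by
  simp only [Wtil, Matrix.mul_sub, Matrix.sub_mul, Matrix.add_mul, Matrix.one_mul,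
    Matrix.mul_one, Matrix.mul_assoc]
  abel

theorem Atil_eq_one_sub_Wtil_mul_mul (S : Matrix (Fin ny) (Fin ny) ℝ) :
    Atil A Q G C R S = (1 - Wtil A Q G C R S * C) * A := by
  rw [Atil, one_sub_Kg_mul_mul_one_sub_mul_Mg_mul]

theorem rho_eq_josephForm (S : Matrix (Fin ny) (Fin ny) ℝ) :
    rho A Q G C R S = josephForm C R (Wtil A Q G C R S) (A * S * Aᵀ + Q) := by
  rw [rho, Atil_eq_one_sub_Wtil_mul_mul, Ftil, one_sub_Kg_mul_mul_one_sub_mul_Mg_mul, josephForm]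
  simp only [transpose_neg, transpose_mul, Matrix.neg_mul, Matrix.mul_neg, neg_neg,
    Matrix.mul_add, Matrix.add_mul, Matrix.mul_assoc]

theorem Wtil_mul_of_isUnit_det {S : Matrix (Fin ny) (Fin ny) ℝ}
    (hD : IsUnit ((C * G)ᵀ * (Rt A Q C R S)⁻¹ * (C * G)).det) :
    Wtil A Q G C R S * (C * G) = G := by
  have hMF : Mg A Q G C R S * (C * G) = 1 := by
    simpa only [Mg, Matrix.mul_assoc] using nonsing_inv_mul _ hD
  rw [Wtil, Matrix.add_mul, Matrix.sub_mul, Matrix.mul_assoc G, hMF,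
    Matrix.mul_assoc _ (Mg _ _ _ _ _ _), hMF]
  simp only [Matrix.mul_one, Matrix.mul_assoc, sub_add_cancel]

-- the first-order optimality condition of the gains `K` and `M`
theorem Rt_mul_transpose_Wtil_sub {S : Matrix (Fin ny) (Fin ny) ℝ} (hS : S.IsSymm)
    (hQ : Q.IsSymm) (hR : R.IsSymm) (hRt : IsUnit (Rt A Q C R S).det) :
    Rt A Q C R S * (Wtil A Q G C R S)ᵀ - C * (A * S * Aᵀ + Q) =
      C * G * (rhod A Q G C R S * Gᵀ * (1 - Kg A Q C R S * C)ᵀ) := by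
  have hP : (A * S * Aᵀ + Q).IsSymm := by
    simp [IsSymm, transpose_mul, hS.eq, hQ.eq, Matrix.mul_assoc]
  have hRtS : (Rt A Q C R S).IsSymm := by
    simp [IsSymm, Rt, transpose_mul, hS.eq, hQ.eq, hR.eq, Matrix.mul_assoc]
  have hRtinv : (Rt A Q C R S)⁻¹ᵀ = (Rt A Q C R S)⁻¹ := hRtS.inv.eq
  have hrhod : (rhod A Q G C R S)ᵀ = rhod A Q G C R S := by
    refine IsSymm.inv ?_ |>.eq
    simp [IsSymm, transpose_mul, hRtinv, Matrix.mul_assoc]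
  have hK : Rt A Q C R S * (Kg A Q C R S)ᵀ = C * (A * S * Aᵀ + Q) := by
    simp only [Kg, transpose_mul, transpose_transpose, hRtinv, hP.eq]
    rw [← Matrix.mul_assoc, mul_nonsing_inv _ hRt, Matrix.one_mul]
  have hM : Rt A Q C R S * (Mg A Q G C R S)ᵀ = C * G * rhod A Q G C R S := by
    have hMg : Mg A Q G C R S = rhod A Q G C R S * (C * G)ᵀ * (Rt A Q C R S)⁻¹ := rfl
    simp only [hMg, transpose_mul, transpose_transpose, hRtinv, hrhod]
    rw [← Matrix.mul_assoc, mul_nonsing_inv _ hRt, Matrix.one_mul]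
  have hW : Wtil A Q G C R S = (1 - Kg A Q C R S * C) * G * Mg A Q G C R S + Kg A Q C R S := by
    simp only [Wtil, Matrix.sub_mul, Matrix.one_mul]
  rw [hW, transpose_add, Matrix.mul_add, hK, add_sub_cancel_right, transpose_mul,
    ← Matrix.mul_assoc, hM]
  simp only [transpose_mul, Matrix.mul_assoc]

theorem posDef_Rt {S : Matrix (Fin ny) (Fin ny) ℝ} (hS : S.PosSemidef) (hQ : Q.PosDef)
    (hR : R.PosDef) : (Rt A Q C R S).PosDef := by
  have hP : (A * S * Aᵀ + Q).PosDef := by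
    simpa using PosDef.posSemidef_add (hS.mul_mul_conjTranspose_same A) hQ
  simpa [Rt] using PosDef.posSemidef_add (hP.posSemidef.mul_mul_conjTranspose_same C) hR

theorem posDef_transpose_mul_inv_Rt_mul {S : Matrix (Fin ny) (Fin ny) ℝ}
    (hRt : (Rt A Q C R S).PosDef) (hF : (C * G).rank = nd) :
    ((C * G)ᵀ * (Rt A Q C R S)⁻¹ * (C * G)).PosDef := by
  simpa using hRt.inv.conjTranspose_mul_mul_same
    (Matrix.mulVec_injective_of_rank_eq (hF.trans (Fintype.card_fin nd).symm))

theorem posSemidef_rho {S : Matrix (Fin ny) (Fin ny) ℝ} (hS : S.PosSemidef) (hQ : Q.PosDef)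
    (hR : R.PosDef) : (rho A Q G C R S).PosSemidef := by
  rw [rho_eq_josephForm]
  exact posSemidef_josephForm _ _ hR.posSemidef
    (by simpa using (hS.mul_mul_conjTranspose_same A).add hQ.posSemidef)

theorem exists_hasDerivAt_Wtil_comp {σ : ℝ → Matrix (Fin ny) (Fin ny) ℝ}
    {H : Matrix (Fin ny) (Fin ny) ℝ} {x : ℝ} (hσ : HasDerivAt σ H x)
    (hRt : IsUnit (Rt A Q C R (σ x)).det)
    (hD : IsUnit ((C * G)ᵀ * (Rt A Q C R (σ x))⁻¹ * (C * G)).det) :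
    ∃ W', HasDerivAt (fun t => Wtil A Q G C R (σ t)) W' x ∧ W' * (C * G) = 0 := by
  have hP : HasDerivAt (fun t => A * σ t * Aᵀ + Q) (A * H * Aᵀ) x :=
    ((hσ.const_matrix_mul A).matrix_mul_const Aᵀ).add_const Q
  have hRtinv := (((hP.const_matrix_mul C).matrix_mul_const Cᵀ).add_const R).matrix_inv hRt
  have hD' := (hRtinv.const_matrix_mul (C * G)ᵀ).matrix_mul_const (C * G)
  have hM : HasDerivAt (fun t => Mg A Q G C R (σ t)) _ x :=
    ((hD'.matrix_inv hD).matrix_mul_const (C * G)ᵀ).matrix_mul hRtinv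
  have hK : HasDerivAt (fun t => Kg A Q C R (σ t)) _ x :=
    (hP.matrix_mul_const Cᵀ).matrix_mul hRtinv
  have hW : HasDerivAt (fun t => Wtil A Q G C R (σ t)) _ x :=
    ((hM.const_matrix_mul G).sub
      (((hK.matrix_mul_const C).matrix_mul_const G).matrix_mul hM)).add hK
  refine ⟨_, hW, ?_⟩
  -- `W̃ F = G` holds on a whole neighbourhood of `x`, so its derivative annihilates `F`
  have hWF : (fun t => Wtil A Q G C R (σ t) * (C * G)) =ᶠ[nhds x] fun _ => G :=
    (hD'.continuousAt.eventually_isUnit_det hD).mono fun _ ht => Wtil_mul_of_isUnit_det ht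
  exact (hW.matrix_mul_const (C * G)).unique ((hasDerivAt_const x G).congr_of_eventuallyEq hWF)

theorem hasDerivAt_rho_comp (hQ : Q.PosDef) (hR : R.PosDef) (hF : (C * G).rank = nd)
    {σ : ℝ → Matrix (Fin ny) (Fin ny) ℝ} {H : Matrix (Fin ny) (Fin ny) ℝ} {x : ℝ}
    (hσ : HasDerivAt σ H x) (hS : (σ x).PosSemidef) :
    HasDerivAt (fun t => rho A Q G C R (σ t))
      (Atil A Q G C R (σ x) * H * (Atil A Q G C R (σ x))ᵀ) x := by
  have hRt := posDef_Rt (A := A) (C := C) hS hQ hR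
  obtain ⟨W', hW, hWF⟩ := exists_hasDerivAt_Wtil_comp hσ hRt.det_pos.ne'.isUnit
    (posDef_transpose_mul_inv_Rt_mul hRt hF).det_pos.ne'.isUnit
  have hP : HasDerivAt (fun t => A * σ t * Aᵀ + Q) (A * H * Aᵀ) x :=
    ((hσ.const_matrix_mul A).matrix_mul_const Aᵀ).add_const Q
  have hPx : (A * σ x * Aᵀ + Q).IsSymm := by
    simpa using ((hS.mul_mul_conjTranspose_same A).add hQ.posSemidef).1
  have hRS : R.IsSymm := isHermitian_iff_isSymm.1 hR.1
  have hstat :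
      W' * (Rt A Q C R (σ x) * (Wtil A Q G C R (σ x))ᵀ - C * (A * σ x * Aᵀ + Q)) = 0 := by
    rw [Rt_mul_transpose_Wtil_sub (isHermitian_iff_isSymm.1 hS.1)
      (isHermitian_iff_isSymm.1 hQ.1) hRS hRt.det_pos.ne'.isUnit, ← Matrix.mul_assoc, hWF,
      Matrix.zero_mul]
  simp only [rho_eq_josephForm]
  convert hW.josephForm hP hPx hRS hstat using 1
  simp only [Atil_eq_one_sub_Wtil_mul_mul, transpose_mul, Matrix.mul_assoc]

end UnknownInputFilter

section Horizon

variable {ny nz nd : ℕ} {A Q : ℕ → Matrix (Fin ny) (Fin ny) ℝ}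
  {G : ℕ → Matrix (Fin ny) (Fin nd) ℝ} {C : ℕ → Matrix (Fin nz) (Fin ny) ℝ}
  {R : ℕ → Matrix (Fin nz) (Fin nz) ℝ}

theorem posSemidef_phiMap (hQ : ∀ k, (Q k).PosDef) (hR : ∀ k, (R k).PosDef)
    {S0 : Matrix (Fin ny) (Fin ny) ℝ} (hS0 : S0.PosSemidef) (k : ℕ) :
    (phiMap A Q G C R k S0).PosSemidef := by
  induction k with
  | zero => exact hS0
  | succ k ih => exact posSemidef_rho ih (hQ k) (hR (k + 1))

theorem hasDerivAt_phiMap_add_smul (hQ : ∀ k, (Q k).PosDef) (hR : ∀ k, (R k).PosDef)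
    (hF : ∀ k, (C (k + 1) * G k).rank = nd) {S0 : Matrix (Fin ny) (Fin ny) ℝ}
    (hS0 : S0.PosSemidef) (X : Matrix (Fin ny) (Fin ny) ℝ) (k : ℕ) :
    HasDerivAt (fun ε : ℝ => phiMap A Q G C R k (S0 + ε • X))
      (PsiProd A Q G C R S0 k * X * (PsiProd A Q G C R S0 k)ᵀ) 0 := by
  induction k with
  | zero =>
    simp only [phiMap, PsiProd, Matrix.one_mul, transpose_one, Matrix.mul_one]
    exact (((hasDerivAt_id' (0 : ℝ)).smul_const X).const_add S0).congr_deriv (one_smul ℝ X)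
  | succ k ih =>
    have h := hasDerivAt_rho_comp (A := A k) (hQ k) (hR (k + 1)) (hF k) ih
      (by simpa using posSemidef_phiMap hQ hR hS0 k)
    simpa [phiMap, PsiProd, transpose_mul, Matrix.mul_assoc] using h

end Horizon

theorem khorizon_directional_derivative_general {ny nz nd : ℕ} (N : ℕ)
    (A Q : ℕ → Matrix (Fin ny) (Fin ny) ℝ) (G : ℕ → Matrix (Fin ny) (Fin nd) ℝ)
    (C : ℕ → Matrix (Fin nz) (Fin ny) ℝ) (R : ℕ → Matrix (Fin nz) (Fin nz) ℝ)
    (hQ : ∀ k, (Q k).PosDef) (hR : ∀ k, (R k).PosDef)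
    (hF : ∀ k, (C (k + 1) * G k).rank = nd)
    (S0 X : Matrix (Fin ny) (Fin ny) ℝ) (hS0 : S0.PosSemidef) :
    (∀ k, 1 ≤ k → k ≤ N →
      HasDerivAt (fun ε : ℝ => phiMap A Q G C R k (S0 + ε • X))
        (PsiProd A Q G C R S0 k * X * (PsiProd A Q G C R S0 k)ᵀ) 0) ∧
    HasDerivAt (fun ε : ℝ => phiMap A Q G C R 0 (S0 + ε • X)) X 0 :=
  ⟨fun k _ _ => hasDerivAt_phiMap_add_smul hQ hR hF hS0 X k,
    by simpa [PsiProd] using hasDerivAt_phiMap_add_smul hQ hR hF hS0 X 0⟩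

/-- for every horizon `k ∈ [1,N]` and PSD `Σ₀, X`, the map
`ε ↦ φ_k(Σ₀ + εX)` is differentiable at `ε = 0` with derivative `Ψ_k X Ψ_kᵀ`,
where `Ψ_k = Ã_k ⋯ Ã_1`; moreover the 0-horizon directional derivative is `X`. -/
theorem khorizon_directional_derivative {ny nz nd : ℕ} (N : ℕ)
    (A Q : ℕ → Matrix (Fin ny) (Fin ny) ℝ) (G : ℕ → Matrix (Fin ny) (Fin nd) ℝ)
    (C : ℕ → Matrix (Fin nz) (Fin ny) ℝ) (R : ℕ → Matrix (Fin nz) (Fin nz) ℝ)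
    (hQ : ∀ k, (Q k).PosDef) (hR : ∀ k, (R k).PosDef)
    (hF : ∀ k, (C (k + 1) * G k).rank = nd)
    (S0 X : Matrix (Fin ny) (Fin ny) ℝ) (hS0 : S0.PosSemidef) (hX : X.PosSemidef) :
    (∀ k, 1 ≤ k → k ≤ N →
      HasDerivAt (fun ε : ℝ => phiMap A Q G C R k (S0 + ε • X))
        (PsiProd A Q G C R S0 k * X * (PsiProd A Q G C R S0 k)ᵀ) 0) ∧
    HasDerivAt (fun ε : ℝ => phiMap A Q G C R 0 (S0 + ε • X)) X 0 :=
  khorizon_directional_derivative_general N A Q G C R hQ hR hF S0 X hS0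
end
end

section
/- For every positive semidefinite matrix Σ, the unknown-input error covariance update satisfies the lower bound ρᵈ(Σ) ⪰ (Fᵀ R⁻¹ F)⁻¹ = (Gᵀ H G)⁻¹ with H := Cᵀ R⁻¹ C; in particular, if the largest eigenvalue of Gᵀ H G is at most λ̄_H, then ρᵈ(Σ) ⪰ λ̄_H⁻¹ I. -/
open Matrix BigOperators

noncomputable section

/-
Because `Σ ⪰ 0` and `Q ≻ 0`, `R̃(Σ) = R + C (A Σ Aᵀ + Q) Cᵀ ⪰ R`. Inversion is antitone on positive
definite matrices and congruence by `F` (injective, as it has full column rank) is monotone, so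
`M ↦ (Fᵀ M⁻¹ F)⁻¹` is monotone and `ρᵈ(Σ) ⪰ (Fᵀ R⁻¹ F)⁻¹`. Inverting `Gᵀ H G ⪯ λ̄_H I` once more
gives `(Gᵀ H G)⁻¹ ⪰ λ̄_H⁻¹ I`.
-/

open scoped MatrixOrder ComplexOrder

namespace Matrix

variable {𝕜 : Type*} [RCLike 𝕜] {m n : Type*}

theorem mulVec_injective_of_rank_eq_card_s16 [Fintype n] {K : Type*} [Field K] (F : Matrix m n K)
    (hF : F.rank = Fintype.card n) : Function.Injective F.mulVec := by
  change Function.Injective F.mulVecLin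
  rw [← LinearMap.ker_eq_bot]
  have := LinearMap.finrank_range_add_finrank_ker F.mulVecLin
  rw [← rank, hF, Module.finrank_fintype_fun_eq_card] at this
  exact Submodule.finrank_eq_zero.mp (by omega)

theorem PosDef.of_le {A B : Matrix n n 𝕜} (hA : A.PosDef) (hAB : A ≤ B) : B.PosDef := by
  simpa using hA.add_posSemidef hAB

theorem PosDef.inv_le_inv [Fintype n] [DecidableEq n] {A B : Matrix n n 𝕜} (hB : B.PosDef)
    (hBA : B ≤ A) : A⁻¹ ≤ B⁻¹ := by
  have hA := hB.of_le hBA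
  have := hA.isUnit.invertible
  have := hB.isUnit.invertible
  have key : B⁻¹ - A⁻¹ = A⁻¹ * (A - B) * A⁻¹ + (B⁻¹ - A⁻¹) * B * (B⁻¹ - A⁻¹) := by
    simp only [Matrix.sub_mul, Matrix.mul_sub, Matrix.mul_assoc, mul_inv_of_invertible,
      inv_mul_of_invertible, Matrix.mul_one, Matrix.one_mul]
    abel
  have hAinv : A⁻¹ᴴ = A⁻¹ := hA.isHermitian.inv.eq
  have hdiff : (B⁻¹ - A⁻¹)ᴴ = B⁻¹ - A⁻¹ := (hB.isHermitian.inv.sub hA.isHermitian.inv).eq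
  rw [le_iff, key]
  refine .add ?_ ?_
  · simpa [hAinv] using hBA.conjTranspose_mul_mul_same A⁻¹
  · simpa [hdiff] using hB.posSemidef.conjTranspose_mul_mul_same (B⁻¹ - A⁻¹)

theorem inv_smul_one [Fintype n] [DecidableEq n] (c : 𝕜) :
    (c • (1 : Matrix n n 𝕜))⁻¹ = c⁻¹ • 1 := by
  rcases eq_or_ne c 0 with rfl | hc
  · simp
  · exact inv_eq_left_inv (by simp [smul_smul, hc])

theorem PosDef.smul_one_inv_le_inv [Fintype n] [DecidableEq n] {N : Matrix n n 𝕜}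
    (hN : N.PosDef) {c : 𝕜} (hc : N ≤ c • 1) : c⁻¹ • 1 ≤ N⁻¹ := by
  simpa [inv_smul_one] using hN.inv_le_inv hc

theorem PosDef.inv_conjTranspose_mul_inv_mul_le [Fintype m] [DecidableEq m]
    [Fintype n] [DecidableEq n] {M₁ M₂ : Matrix m m 𝕜} (hM₁ : M₁.PosDef)
    (hM : M₁ ≤ M₂) {F : Matrix m n 𝕜} (hF : Function.Injective F.mulVec) :
    (Fᴴ * M₁⁻¹ * F)⁻¹ ≤ (Fᴴ * M₂⁻¹ * F)⁻¹ := by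
  have hM₂ := hM₁.of_le hM
  refine (hM₂.inv.conjTranspose_mul_mul_same hF).inv_le_inv ?_
  rw [le_iff, ← Matrix.sub_mul, ← Matrix.mul_sub]
  exact (hM₁.inv_le_inv hM).conjTranspose_mul_mul_same F

end Matrix

theorem le_Rt {ny nz : ℕ} {A Q S : Matrix (Fin ny) (Fin ny) ℝ} (C : Matrix (Fin nz) (Fin ny) ℝ)
    (R : Matrix (Fin nz) (Fin nz) ℝ) (hQ : Q.PosSemidef) (hS : S.PosSemidef) :
    R ≤ Rt A Q C R S := by
  have hASA : (A * S * Aᵀ).PosSemidef := by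
    simpa [conjTranspose_eq_transpose_of_trivial] using hS.mul_mul_conjTranspose_same A
  have hCMC : (C * (A * S * Aᵀ + Q) * Cᵀ).PosSemidef := by
    simpa [conjTranspose_eq_transpose_of_trivial] using
      (hASA.add hQ).mul_mul_conjTranspose_same C
  exact le_add_of_nonneg_left (nonneg_iff_posSemidef.mpr hCMC)

/-- for every PSD `Σ`, `ρᵈ(Σ) ⪰ (Fᵀ R⁻¹ F)⁻¹ = (Gᵀ H G)⁻¹` with
`H = Cᵀ R⁻¹ C`; and if the largest eigenvalue of `Gᵀ H G` is at most `λ̄_H`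
(i.e. `Gᵀ H G ⪯ λ̄_H I`), then `ρᵈ(Σ) ⪰ λ̄_H⁻¹ I`. -/
theorem input_update_lower_bound {ny nz nd : ℕ}
    (A Q : Matrix (Fin ny) (Fin ny) ℝ) (G : Matrix (Fin ny) (Fin nd) ℝ)
    (C : Matrix (Fin nz) (Fin ny) ℝ) (R : Matrix (Fin nz) (Fin nz) ℝ)
    (hQ : Q.PosDef) (hR : R.PosDef) (hF : (C * G).rank = nd)
    (S : Matrix (Fin ny) (Fin ny) ℝ) (hS : S.PosSemidef) :
    (rhod A Q G C R S - ((C * G)ᵀ * R⁻¹ * (C * G))⁻¹).PosSemidef ∧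
    ((C * G)ᵀ * R⁻¹ * (C * G))⁻¹ = (Gᵀ * (Cᵀ * R⁻¹ * C) * G)⁻¹ ∧
    ∀ lamH : ℝ,
      (lamH • (1 : Matrix (Fin nd) (Fin nd) ℝ) - Gᵀ * (Cᵀ * R⁻¹ * C) * G).PosSemidef →
      (rhod A Q G C R S - lamH⁻¹ • (1 : Matrix (Fin nd) (Fin nd) ℝ)).PosSemidef := by
  have hF' : Function.Injective (C * G).mulVec :=
    mulVec_injective_of_rank_eq_card_s16 (C * G) (by rw [hF, Fintype.card_fin])
  have hGHG : Gᵀ * (Cᵀ * R⁻¹ * C) * G = (C * G)ᵀ * R⁻¹ * (C * G) := by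
    simp only [transpose_mul, Matrix.mul_assoc]
  have hlower : ((C * G)ᵀ * R⁻¹ * (C * G))⁻¹ ≤ rhod A Q G C R S := by
    simpa [rhod, conjTranspose_eq_transpose_of_trivial] using
      hR.inv_conjTranspose_mul_inv_mul_le (le_Rt C R hQ.posSemidef hS) hF'
  refine ⟨hlower, by rw [hGHG], fun lamH hlam => ?_⟩
  have hGHG_posDef : (Gᵀ * (Cᵀ * R⁻¹ * C) * G).PosDef := by
    simpa [hGHG, conjTranspose_eq_transpose_of_trivial] using
      hR.inv.conjTranspose_mul_mul_same hF'
  exact (hGHG_posDef.smul_one_inv_le_inv hlam).trans (hGHG ▸ hlower)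
end
end
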